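/- Exact normalization of the nonlinear weight numerators: for every integer r ≥ 2, t = 2r−1, every h > 0, and arbitrary nonnegative real numbers J_{−r+1}, …, J_{−1}, J_{1}, …, J_{r−1}, the quantities α_0, …, α_{r−1} defined by α_k = C^{2r-1}_{r-1,k} + h^{−t}·( Σ_{l=k+1}^{r-1} C^{r+l-1}_{l-1,k}·J_l + Σ_{l=0}^{k-1} C^{2r-l-2}_{r-1,k}·J_{l-r+1} ) satisfy Σ_{k=0}^{r-1} α_k = 1 + h^{−t} · Σ_{l=1}^{r-1} (J_l + J_{−l}). -/

import Mathlib

/-- The classical optimal weights `C^{2r-1}_{r-1,k} = 2^{-(2r-1)} · C(2r, 2k+1)`. -/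
noncomputable def Copt (r k : ℕ) : ℝ :=
  (1 / 2 ^ (2 * r - 1)) * (Nat.choose (2 * r) (2 * k + 1) : ℝ)

/-- The general optimal weights `C^{r+l-1}_{l-1,k}`, for `1 ≤ l ≤ r` and `0 ≤ k ≤ l-1`. -/
noncomputable def C1 (r l k : ℕ) : ℝ :=
  (1 / 2 ^ (2 * l)) * (((r : ℝ) + (l : ℝ)) / (l : ℝ)) *
    (((l : ℝ) - (k : ℝ)) / ((r : ℝ) - (k : ℝ))) *
    (Nat.choose l k : ℝ) * ((Nat.choose r k : ℝ))⁻¹ * (Nat.choose (2 * l) l : ℝ) *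
    ((Nat.choose (l + r) r : ℝ))⁻¹ * (Nat.choose (2 * r) (2 * k + 1) : ℝ)

/-- The nonlinear weight numerators
`α_k = C^{2r-1}_{r-1,k} + h^{-(2r-1)}·(Σ_{l=k+1}^{r-1} C^{r+l-1}_{l-1,k} J_l
  + Σ_{l=0}^{k-1} C^{2r-l-2}_{r-1,k} J_{l-r+1})`,
where the reflected weight `C^{2r-l-2}_{r-1,k}` equals `C1 r (r-l-1) (r-1-k)`. -/
noncomputable def alphaJ (r : ℕ) (h : ℝ) (J : ℤ → ℝ) (k : ℕ) : ℝ :=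
  Copt r k + (h ^ (2 * r - 1))⁻¹ *
    ((∑ l ∈ Finset.Icc (k + 1) (r - 1), C1 r l k * J (l : ℤ)) +
      ∑ l ∈ Finset.range k, C1 r (r - l - 1) (r - 1 - k) * J ((l : ℤ) - (r : ℤ) + 1))

/-!
Write `r = l + a`. The weight `C^{r+l-1}_{l-1,k}` simplifies to
`C(2r, 2k+1) · C(r-k-1, a) / (2^{2l-1} · C(r+l-1, a))`, so the weights of each family sum to one
by `Σ_{k<l} C(2r, 2k+1) · C(r-k-1, a) = 2^{2l-1} · C(r+l-1, a)`. Both sides are the coefficient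
of `X^{2l-1}` in the two sides of `(1+X)^{2r} / (1-X²)^{a+1} = (1+X)^{r+l-1} / (1-X)^{a+1}`: on the
left only odd powers of `(1+X)^{2r}` meet the even series `(1-X²)^{-(a+1)}`.
The classical weights are the family `l = r`; after the reflection `k ↦ r-1-k` the coefficients of
`J_l` and of `J_{-l}` in `Σ_k α_k` are also single families, so each of them sums to one.
-/

open PowerSeries Finset
open scoped Nat

theorem Finset.sum_range_two_mul {M : Type*} [AddCommMonoid M] (f : ℕ → M) (n : ℕ) :
    ∑ i ∈ range (2 * n), f i = ∑ k ∈ range n, (f (2 * k) + f (2 * k + 1)) := by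
  induction n with
  | zero => simp
  | succ n ih => rw [mul_add_one, sum_range_succ, sum_range_succ, sum_range_succ, ih, add_assoc]

namespace PowerSeries

variable {R : Type*} [CommRing R]

theorem coeff_one_add_X_pow (n k : ℕ) : coeff k ((1 + X : R⟦X⟧) ^ n) = n.choose k := by
  rw [← Polynomial.coe_X, ← Polynomial.coe_one, ← Polynomial.coe_add, ← Polynomial.coe_pow,
    Polynomial.coeff_coe, Polynomial.coeff_one_add_X_pow]

theorem one_add_X_pow_mul_expand_invOneSubPow (d : ℕ) :
    (1 + X : R⟦X⟧) ^ d * expand 2 two_ne_zero (invOneSubPow R d).val = (invOneSubPow R d).val := by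
  set G : R⟦X⟧ := (invOneSubPow R d).val
  have hG : (1 - X : R⟦X⟧) ^ d * G = 1 := by
    rw [← invOneSubPow_inv_eq_one_sub_pow]
    exact (invOneSubPow R d).inv_val
  have hE : (1 - X ^ 2 : R⟦X⟧) ^ d * expand 2 two_ne_zero G = 1 := by
    simpa using congrArg (expand 2 two_ne_zero) hG
  calc (1 + X) ^ d * expand 2 two_ne_zero G
      = (1 - X) ^ d * G * ((1 + X) ^ d * expand 2 two_ne_zero G) := by rw [hG, one_mul]
    _ = G * (((1 - X) * (1 + X)) ^ d * expand 2 two_ne_zero G) := by rw [mul_pow]; ring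
    _ = G := by rw [show (1 - X) * (1 + X) = (1 - X ^ 2 : R⟦X⟧) by ring, hE, mul_one]

theorem coeff_one_add_X_pow_mul_expand_two (N m : ℕ) (f : R⟦X⟧) :
    coeff (2 * m + 1) ((1 + X) ^ N * expand 2 two_ne_zero f) =
      ∑ k ∈ range (m + 1), N.choose (2 * k + 1) * coeff (m - k) f := by
  rw [coeff_mul, Nat.sum_antidiagonal_eq_sum_range_succ_mk,
    show (2 * m + 1).succ = 2 * (m + 1) by omega, sum_range_two_mul]
  refine sum_congr rfl fun k hk => ?_
  have hkm : k ≤ m := by simpa [Nat.lt_succ_iff] using hk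
  have hodd : ¬ 2 ∣ 2 * m + 1 - 2 * k := by omega
  rw [coeff_expand_of_not_dvd _ _ _ hodd, mul_zero, zero_add, coeff_one_add_X_pow,
    show 2 * m + 1 - (2 * k + 1) = 2 * (m - k) by omega, coeff_expand_mul]

theorem coeff_one_add_X_pow_mul_invOneSubPow (n a : ℕ) :
    coeff n ((1 + X : R⟦X⟧) ^ (n + a) * (invOneSubPow R (a + 1)).val) =
      (2 ^ n * (n + a).choose a : ℕ) := by
  have hterm : ∀ i ∈ range (n + 1), (n + a).choose i * (a + (n - i)).choose a =
      (n + a).choose n * n.choose i := by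
    intro i hi
    rw [Nat.choose_mul (Nat.lt_succ_iff.mp (mem_range.mp hi)), add_comm a,
      Nat.sub_add_comm (Nat.lt_succ_iff.mp (mem_range.mp hi)), Nat.choose_symm_add]
  rw [coeff_mul, Nat.sum_antidiagonal_eq_sum_range_succ_mk]
  simp only [coeff_one_add_X_pow, invOneSubPow_val_succ_eq_mk_add_choose, coeff_mk]
  norm_cast
  rw [sum_congr rfl hterm, ← mul_sum, Nat.sum_range_choose, Nat.choose_symm_add, mul_comm]

end PowerSeries

theorem Nat.sum_choose_two_mul_add_one_mul_choose {l r : ℕ} (hl : 0 < l) (hlr : l ≤ r) :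
    ∑ k ∈ range l, (2 * r).choose (2 * k + 1) * (r - k - 1).choose (r - l) =
      2 ^ (2 * l - 1) * (r + l - 1).choose (r - l) := by
  obtain ⟨m, rfl⟩ : ∃ m, l = m + 1 := ⟨l - 1, by omega⟩
  obtain ⟨a, rfl⟩ : ∃ a, r = m + 1 + a := ⟨r - (m + 1), by omega⟩
  have key := congrArg (fun f => coeff (2 * m + 1) ((1 + X : ℤ⟦X⟧) ^ (2 * m + 1 + a) * f))
    (one_add_X_pow_mul_expand_invOneSubPow (R := ℤ) (a + 1))
  rw [← mul_assoc, ← pow_add, coeff_one_add_X_pow_mul_expand_two,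
    coeff_one_add_X_pow_mul_invOneSubPow] at key
  simp only [invOneSubPow_val_succ_eq_mk_add_choose, coeff_mk] at key
  norm_cast at key
  rw [show 2 * m + 1 + a + (a + 1) = 2 * (m + 1 + a) by ring] at key
  rw [show 2 * (m + 1) - 1 = 2 * m + 1 by omega, show m + 1 + a - (m + 1) = a by omega,
    show m + 1 + a + (m + 1) - 1 = 2 * m + 1 + a by omega, ← key]
  refine sum_congr rfl fun k hk => ?_
  rw [show m + 1 + a - k - 1 = a + (m - k) by have := mem_range.mp hk; omega]

theorem Nat.cast_choose_of_add_eq (K : Type*) [DivisionSemiring K] [CharZero K] {n a b : ℕ}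
    (h : a + b = n) : (n.choose a : K) = n ! / (a ! * b !) := by
  subst h; exact Nat.cast_add_choose K

theorem Nat.cast_factorial_of_add_one_eq (K : Type*) [Semiring K] {n m : ℕ} (h : m + 1 = n) :
    (n ! : K) = n * m ! := by
  subst h; push_cast [Nat.factorial_succ]; rfl

theorem C1_eq_choose_div {r l k : ℕ} (hkl : k < l) (hlr : l ≤ r) :
    C1 r l k = (2 * r).choose (2 * k + 1) * (r - k - 1).choose (r - l) /
      (2 ^ (2 * l - 1) * (r + l - 1).choose (r - l)) := by
  obtain ⟨d, rfl⟩ : ∃ d, l = k + d + 1 := ⟨l - k - 1, by omega⟩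
  obtain ⟨e, rfl⟩ : ∃ e, r = k + d + 1 + e := ⟨r - (k + d + 1), by omega⟩
  rw [show k + d + 1 + e - k - 1 = d + e by omega, show k + d + 1 + e - (k + d + 1) = e by omega,
    show 2 * (k + d + 1) - 1 = 2 * k + 2 * d + 1 by omega,
    show k + d + 1 + e + (k + d + 1) - 1 = 2 * k + 2 * d + 1 + e by omega]
  unfold C1
  rw [Nat.cast_choose_of_add_eq ℝ (show k + (d + 1) = k + d + 1 by ring),
    Nat.cast_choose_of_add_eq ℝ (show k + (d + e + 1) = k + d + 1 + e by ring),
    Nat.cast_choose_of_add_eq ℝ (show (k + d + 1) + (k + d + 1) = 2 * (k + d + 1) by ring),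
    Nat.cast_choose_of_add_eq ℝ
      (show (k + d + 1 + e) + (k + d + 1) = k + d + 1 + (k + d + 1 + e) by ring),
    Nat.cast_choose_of_add_eq ℝ (show e + d = d + e by ring),
    Nat.cast_choose_of_add_eq ℝ (show e + (2 * k + 2 * d + 1) = 2 * k + 2 * d + 1 + e by ring),
    Nat.cast_factorial_of_add_one_eq ℝ (n := d + 1) rfl,
    Nat.cast_factorial_of_add_one_eq ℝ (n := d + e + 1) rfl,
    Nat.cast_factorial_of_add_one_eq ℝ (show (2 * k + 2 * d + 1) + 1 = 2 * (k + d + 1) by ring),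
    Nat.cast_factorial_of_add_one_eq ℝ
      (show (2 * k + 2 * d + 1 + e) + 1 = k + d + 1 + (k + d + 1 + e) by ring)]
  have hrk : ((k + d + 1 + e : ℕ) : ℝ) - k ≠ 0 := by push_cast; ring_nf; positivity
  push_cast at hrk ⊢
  field_simp
  ring

theorem sum_range_C1 {r l : ℕ} (hl : 0 < l) (hlr : l ≤ r) : ∑ k ∈ range l, C1 r l k = 1 := by
  have hpos : (0 : ℝ) < 2 ^ (2 * l - 1) * (r + l - 1).choose (r - l) :=
    mul_pos (by positivity) (Nat.cast_pos.mpr (Nat.choose_pos (by omega)))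
  rw [sum_congr rfl fun k hk => C1_eq_choose_div (mem_range.mp hk) hlr, ← sum_div,
    div_eq_one_iff_eq hpos.ne']
  exact_mod_cast Nat.sum_choose_two_mul_add_one_mul_choose hl hlr

theorem Copt_eq_C1 {r k : ℕ} (hk : k < r) : Copt r k = C1 r r k := by
  rw [C1_eq_choose_div hk le_rfl, Copt]
  simp [show r + r - 1 = 2 * r - 1 by omega, div_eq_inv_mul]

theorem sum_range_Copt {r : ℕ} (hr : 0 < r) : ∑ k ∈ range r, Copt r k = 1 := by
  rw [sum_congr rfl fun k hk => Copt_eq_C1 (mem_range.mp hk), sum_range_C1 hr le_rfl]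

theorem sum_range_sum_Icc_C1_mul (r : ℕ) (f : ℕ → ℝ) :
    ∑ k ∈ range r, ∑ l ∈ Icc (k + 1) (r - 1), C1 r l k * f l = ∑ l ∈ Icc 1 (r - 1), f l := by
  rw [sum_comm' (t' := Icc 1 (r - 1)) (s' := range)
    (by intro k l; simp only [mem_range, mem_Icc]; omega)]
  refine sum_congr rfl fun l hl => ?_
  replace hl := mem_Icc.mp hl
  rw [← sum_mul, sum_range_C1 (by omega) (by omega), one_mul]

theorem sum_range_sum_range_C1_reflect_mul (r : ℕ) (J : ℤ → ℝ) :
    ∑ k ∈ range r, ∑ l ∈ range k, C1 r (r - l - 1) (r - 1 - k) * J ((l : ℤ) - r + 1) =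
      ∑ k ∈ range r, ∑ l ∈ Icc (k + 1) (r - 1), C1 r l k * J (-(l : ℤ)) := by
  rw [← sum_range_reflect]
  refine sum_congr rfl fun k hk => ?_
  replace hk := mem_range.mp hk
  refine sum_nbij' (fun l => r - 1 - l) (fun l => r - 1 - l) ?_ ?_ ?_ ?_ fun l hl => ?_
  any_goals (intro l hl; simp only [mem_range, mem_Icc] at hl ⊢; omega)
  replace hl := mem_range.mp hl
  rw [show r - l - 1 = r - 1 - l by omega, show r - 1 - (r - 1 - k) = k by omega]
  congr 2
  omega

theorem alpha_normalization (r : ℕ) (hr : 2 ≤ r) (h : ℝ) (J : ℤ → ℝ) :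
    (∑ k ∈ Finset.range r, alphaJ r h J k) =
      1 + (h ^ (2 * r - 1))⁻¹ * ∑ l ∈ Finset.Icc 1 (r - 1), (J (l : ℤ) + J (-(l : ℤ))) := by
  simp only [alphaJ, sum_add_distrib, ← mul_sum]
  rw [sum_range_Copt (by omega), sum_range_sum_range_C1_reflect_mul,
    sum_range_sum_Icc_C1_mul r (fun l => J l), sum_range_sum_Icc_C1_mul r (fun l => J (-l))]
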